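/- Let j ≥ 1/2 be a half-integer or integer and d = 2j+1. Then B_{j,2} = 4j − 1 − √(1 − 4j + 8j²). -/

import Mathlib

open Matrix Kronecker BigOperators Finset
open scoped ComplexOrder

/-- Expectation value ⟨A⟩_ρ = Re tr(ρ A). -/
noncomputable def expval {n : Type*} [Fintype n] (ρ A : Matrix n n ℂ) : ℝ :=
  ((ρ * A).trace).re

/-- A density matrix: positive semidefinite with unit trace. -/
def IsDensityMatrix {n : Type*} [Fintype n] (ρ : Matrix n n ℂ) : Prop :=
  ρ.PosSemidef ∧ ρ.trace = 1

/-- The projector |v⟩⟨v| associated to a vector. -/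
noncomputable def pureState {n : Type*} (v : n → ℂ) : Matrix n n ℂ :=
  Matrix.vecMulVec v (star v)

/-- A normalized vector. -/
def IsUnitVec {n : Type*} [Fintype n] (v : n → ℂ) : Prop :=
  ∑ i, Complex.normSq (v i) = 1

/-- The canonical Hermitian operator basis of ℂ^d, indexed by pairs (j,k):
diagonal operators for j = k, real operators for j < k, imaginary operators for j > k. -/
noncomputable def canonG (d : ℕ) : Fin d × Fin d → Matrix (Fin d) (Fin d) ℂ := fun μ =>
  if μ.1 = μ.2 then Matrix.single μ.1 μ.1 1
  else if μ.1 < μ.2 then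
    ((Real.sqrt 2 : ℂ))⁻¹ • (Matrix.single μ.1 μ.2 1 + Matrix.single μ.2 μ.1 1)
  else
    (Complex.I * ((Real.sqrt 2 : ℂ))⁻¹) •
      (Matrix.single μ.2 μ.1 1 - Matrix.single μ.1 μ.2 1)

/-- Covariance matrix of a family of observables w.r.t. a state ρ. -/
noncomputable def covMat {n K : Type*} [Fintype n] (ρ : Matrix n n ℂ)
    (M : K → Matrix n n ℂ) : Matrix K K ℝ :=
  Matrix.of fun j k =>
    (1/2 : ℝ) * expval ρ (M j * M k + M k * M j) - expval ρ (M j) * expval ρ (M k)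

/-- The local observables (g_μ ⊗ 1, 1 ⊗ g_ν) on the bipartite space. -/
noncomputable def bipObs (d : ℕ) :
    (Fin d × Fin d) ⊕ (Fin d × Fin d) → Matrix (Fin d × Fin d) (Fin d × Fin d) ℂ :=
  Sum.elim (fun μ => canonG d μ ⊗ₖ (1 : Matrix (Fin d) (Fin d) ℂ))
           (fun ν => (1 : Matrix (Fin d) (Fin d) ℂ) ⊗ₖ canonG d ν)

/-- The full covariance matrix Γ_ρ of the canonical bipartite observables. -/
noncomputable def GammaCM (d : ℕ) (ρ : Matrix (Fin d × Fin d) (Fin d × Fin d) ℂ) :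
    Matrix ((Fin d × Fin d) ⊕ (Fin d × Fin d)) ((Fin d × Fin d) ⊕ (Fin d × Fin d)) ℝ :=
  covMat ρ (bipObs d)

/-- The cross-covariance block X_ρ. -/
noncomputable def crossCov (d : ℕ) (ρ : Matrix (Fin d × Fin d) (Fin d × Fin d) ℂ) :
    Matrix (Fin d × Fin d) (Fin d × Fin d) ℝ :=
  Matrix.of fun μ ν =>
    expval ρ (canonG d μ ⊗ₖ canonG d ν)
      - expval ρ (canonG d μ ⊗ₖ 1) * expval ρ ((1 : Matrix (Fin d) (Fin d) ℂ) ⊗ₖ canonG d ν)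

/-- Reduced state on the first subsystem. -/
noncomputable def redA (d : ℕ) (ρ : Matrix (Fin d × Fin d) (Fin d × Fin d) ℂ) :
    Matrix (Fin d) (Fin d) ℂ :=
  Matrix.of fun i j => ∑ k, ρ (i, k) (j, k)

/-- Reduced state on the second subsystem. -/
noncomputable def redB (d : ℕ) (ρ : Matrix (Fin d × Fin d) (Fin d × Fin d) ℂ) :
    Matrix (Fin d) (Fin d) ℂ :=
  Matrix.of fun i j => ∑ k, ρ (k, i) (k, j)

/-- Purity tr(σ²) (real part). -/
noncomputable def purity {n : Type*} [Fintype n] (σ : Matrix n n ℂ) : ℝ :=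
  ((σ * σ).trace).re

/-- Trace norm of a real matrix: sum of its singular values, i.e. tr √(XᵀX). -/
noncomputable def traceNorm {n : Type*} [Fintype n] [DecidableEq n] (X : Matrix n n ℝ) : ℝ :=
  ((Matrix.isHermitian_conjTranspose_mul_self X).eigenvectorUnitary.1 *
      Matrix.diagonal ((RCLike.ofReal : ℝ → ℝ) ∘ (Real.sqrt ·) ∘ (Matrix.isHermitian_conjTranspose_mul_self X).eigenvalues) *
      (star (Matrix.isHermitian_conjTranspose_mul_self X).eigenvectorUnitary : Matrix n n ℝ)).trace

/-- Schmidt rank of a pure state vector is the rank of its coefficient matrix. -/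
def SchmidtRankLE (d r : ℕ) (v : Fin d × Fin d → ℂ) : Prop :=
  (Matrix.of fun j k : Fin d => v (j, k)).rank ≤ r

/-- Schmidt number at most r. -/
def SchmidtNumberLE (d r : ℕ) (ρ : Matrix (Fin d × Fin d) (Fin d × Fin d) ℂ) : Prop :=
  ∃ (n : ℕ) (p : Fin n → ℝ) (ψ : Fin n → (Fin d × Fin d → ℂ)),
    (∀ k, 0 ≤ p k) ∧ (∑ k, p k = 1) ∧ (∀ k, IsUnitVec (ψ k)) ∧
    (∀ k, SchmidtRankLE d r (ψ k)) ∧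
    ρ = ∑ k, (p k : ℂ) • pureState (ψ k)

/-- Variance of an observable in a state. -/
noncomputable def varState {n : Type*} [Fintype n] (σ A : Matrix n n ℂ) : ℝ :=
  expval σ (A * A) - (expval σ A)^2

/-- The magnetic quantum number m_k = k - j - 1 (0-indexed: k - (d-1)/2). -/
noncomputable def spinM (d : ℕ) (k : Fin d) : ℝ := (k : ℝ) - ((d : ℝ) - 1) / 2

/-- The raising operator j₊ for spin j = (d-1)/2. -/
noncomputable def spinPlus (d : ℕ) : Matrix (Fin d) (Fin d) ℂ :=
  Matrix.of fun a b => if (a : ℕ) = (b : ℕ) + 1 then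
    (Real.sqrt (((d : ℝ) - 1) / 2 * (((d : ℝ) - 1) / 2 + 1) - spinM d b * (spinM d b + 1)) : ℂ)
  else 0

/-- The spin operator j_x = (j₊ + j₋)/2. -/
noncomputable def spinX (d : ℕ) : Matrix (Fin d) (Fin d) ℂ :=
  (1 / 2 : ℂ) • (spinPlus d + (spinPlus d)ᴴ)

/-- The spin operator j_y = (j₊ - j₋)/(2i). -/
noncomputable def spinY (d : ℕ) : Matrix (Fin d) (Fin d) ℂ :=
  (-Complex.I / 2) • (spinPlus d - (spinPlus d)ᴴ)

/-- The spin operator j_z. -/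
noncomputable def spinZ (d : ℕ) : Matrix (Fin d) (Fin d) ℂ :=
  Matrix.diagonal fun k => (spinM d k : ℂ)

/-- The quantity Σ_{k=1}^{d-1} k(d-k)(√λ_k - √λ_{k+1})² (0-indexed λ). -/
noncomputable def spinVarSum (d : ℕ) (lam : Fin d → ℝ) : ℝ :=
  ∑ k ∈ Finset.range (d - 1),
    ((k : ℝ) + 1) * ((d : ℝ) - ((k : ℝ) + 1)) *
      (Real.sqrt (if h : k < d then lam ⟨k, h⟩ else 0) -
       Real.sqrt (if h : k + 1 < d then lam ⟨k + 1, h⟩ else 0)) ^ 2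

/-- The bound B_{j,r}: infimum of Σ_k k(d-k)(√λ_k - √λ_{k+1})² over probability
vectors λ ∈ ℝ^d with at most r nonzero entries, where d = 2j+1. -/
noncomputable def Bspin (d r : ℕ) : ℝ :=
  sInf { v : ℝ | ∃ lam : Fin d → ℝ, (∀ k, 0 ≤ lam k) ∧ (∑ k, lam k = 1) ∧
    (Finset.univ.filter fun k => lam k ≠ 0).card ≤ r ∧ v = spinVarSum d lam }

/-! With `n = 2j = d - 1` and `x k = √λ_k`, the sum is the quadratic form
`Σ_{k<n} w_k (x_k - x_{k+1})² = Σ_k c_k x_k² - 2 Σ_k w_k x_k x_{k+1}`, where `w_k = (k+1)(n-k)` and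
`c_k = w_{k-1} + w_k = n + 2k(n-k)`. If `λ` has at most two nonzero entries, at most one cross term
`x_p x_{p+1}` survives, so the form minus `B Σ x_k²` splits into nonnegative diagonal terms
`(c_k - B) x_k²` (as `c_k ≥ n ≥ B`) and the `2 × 2` block `[[c_p, -w_p], [-w_p, c_{p+1}]] - B`,
which is positive semidefinite for `B = 2n - 1 - √(n² + (n-1)²)`. The block `p = 0` has exactly this
least eigenvalue, and its eigenvector, supported on the two lowest levels, attains it. -/

lemma two_mul_mul_le_of_sq_le_mul {A C w x y : ℝ} (hA : 0 ≤ A) (hC : 0 ≤ C)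
    (hw : w ^ 2 ≤ A * C) : 2 * w * (x * y) ≤ A * x ^ 2 + C * y ^ 2 := by
  rcases hA.eq_or_lt with rfl | hA
  · obtain rfl : w = 0 := by nlinarith
    nlinarith [mul_nonneg hC (sq_nonneg y)]
  · nlinarith [sq_nonneg (A * x - w * y), mul_nonneg (sub_nonneg.2 hw) (sq_nonneg y)]

lemma eq_of_mul_succ_ne_zero {x : ℕ → ℝ} {S : Finset ℕ} (hS : ∀ k, x k ≠ 0 → k ∈ S)
    (hcard : S.card ≤ 2) {k p : ℕ} (hk : x k * x (k + 1) ≠ 0) (hp : x p * x (p + 1) ≠ 0) :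
    k = p := by
  wlog hkp : k < p generalizing k p
  · rcases (not_lt.1 hkp).eq_or_lt with h | h
    · exact h.symm
    · exact (this hp hk h).symm
  have hsub : ({k, k + 1, p + 1} : Finset ℕ) ⊆ S := by
    intro i hi
    simp only [mem_insert, mem_singleton] at hi
    rcases hi with rfl | rfl | rfl
    exacts [hS _ (left_ne_zero_of_mul hk), hS _ (right_ne_zero_of_mul hk),
      hS _ (right_ne_zero_of_mul hp)]
  have hthree : ({k, k + 1, p + 1} : Finset ℕ).card = 3 := by
    rw [card_insert_of_notMem (by simp; omega), card_pair (by omega)]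
  have := card_le_card hsub
  omega

lemma sum_range_eq_add_of_two_le {f : ℕ → ℝ} {N : ℕ} (hN : 2 ≤ N) (hf : ∀ k, 2 ≤ k → f k = 0) :
    ∑ k ∈ range N, f k = f 0 + f 1 := by
  rw [← sum_subset (s₁ := {0, 1}), sum_pair zero_ne_one]
  · intro k hk
    simp only [mem_insert, mem_singleton] at hk
    rcases hk with rfl | rfl <;> simp only [mem_range] <;> omega
  · intro k _ hk
    simp only [mem_insert, mem_singleton, not_or] at hk
    exact hf k (by omega)

def spinOff (n k : ℕ) : ℝ := (k + 1) * (n - k)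

/-- `spinOff n (k - 1) + spinOff n k`, the coefficient of `x k ^ 2` once the squares in
`spinForm` are expanded. -/
def spinDiag (n k : ℕ) : ℝ := n + 2 * k * (n - k)

def spinForm (n : ℕ) (x : ℕ → ℝ) : ℝ :=
  ∑ k ∈ range n, spinOff n k * (x k - x (k + 1)) ^ 2

lemma spinForm_eq (n : ℕ) (x : ℕ → ℝ) :
    spinForm n x = ∑ k ∈ range (n + 1), spinDiag n k * x k ^ 2
      - 2 * ∑ k ∈ range n, spinOff n k * (x k * x (k + 1)) := by
  have hleft : ∑ k ∈ range n, spinOff n k * x k ^ 2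
      = ∑ k ∈ range (n + 1), spinOff n k * x k ^ 2 := by
    simp [sum_range_succ, spinOff]
  have hright : ∑ k ∈ range n, spinOff n k * x (k + 1) ^ 2
      = ∑ k ∈ range (n + 1), (k * (n + 1 - k) : ℝ) * x k ^ 2 := by
    rw [sum_range_succ']
    simp only [spinOff, Nat.cast_add, Nat.cast_one, Nat.cast_zero, zero_mul, add_zero]
    exact sum_congr rfl fun k _ => by ring
  have hdiag : ∑ k ∈ range (n + 1), spinDiag n k * x k ^ 2
      = ∑ k ∈ range (n + 1), spinOff n k * x k ^ 2
        + ∑ k ∈ range (n + 1), (k * (n + 1 - k) : ℝ) * x k ^ 2 := by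
    rw [← sum_add_distrib]
    exact sum_congr rfl fun k _ => by simp only [spinDiag, spinOff]; ring
  rw [hdiag, ← hleft, ← hright, spinForm, mul_sum, ← sum_add_distrib, ← sum_sub_distrib]
  exact sum_congr rfl fun k _ => by ring

section Bound

variable {n : ℕ} {s : ℝ}

lemma sub_le_spinDiag (hs : (n : ℝ) - 1 ≤ s) {k : ℕ} (hk : k ≤ n) :
    2 * n - 1 - s ≤ spinDiag n k := by
  have : (k : ℝ) ≤ n := by exact_mod_cast hk
  unfold spinDiag
  nlinarith [mul_nonneg (Nat.cast_nonneg (α := ℝ) k) (sub_nonneg.2 this)]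

lemma spinOff_sq_le (hs0 : 0 ≤ s) (hs : s ^ 2 = n ^ 2 + (n - 1) ^ 2) {p : ℕ} (hp : p < n) :
    spinOff n p ^ 2
      ≤ (spinDiag n p - (2 * n - 1 - s)) * (spinDiag n (p + 1) - (2 * n - 1 - s)) := by
  have hp' : (p : ℝ) + 1 ≤ n := by exact_mod_cast hp
  have hsn : (n : ℝ) ≤ s := by nlinarith
  have hu : (0 : ℝ) ≤ p * (n - 1 - p) := mul_nonneg (Nat.cast_nonneg p) (by linarith)
  unfold spinOff spinDiag
  push_cast
  nlinarith [mul_nonneg hu (by linarith : (0 : ℝ) ≤ s - (n - 1)), sq_nonneg (p * (n - 1 - p)),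
    mul_nonneg hu (by linarith : (0 : ℝ) ≤ n)]


lemma le_spinForm (hs0 : 0 ≤ s) (hs : s ^ 2 = n ^ 2 + (n - 1) ^ 2) {x : ℕ → ℝ} {p : ℕ}
    (hp : p < n) (hx : ∀ k ∈ range n, k ≠ p → x k * x (k + 1) = 0) :
    (2 * n - 1 - s) * ∑ k ∈ range (n + 1), x k ^ 2 ≤ spinForm n x := by
  set B : ℝ := 2 * n - 1 - s
  have hsn : (n : ℝ) - 1 ≤ s := by nlinarith
  have hdiag : ∀ k ∈ range (n + 1), B ≤ spinDiag n k :=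
    fun k hk => sub_le_spinDiag hsn (Nat.lt_succ_iff.1 (mem_range.1 hk))
  have hcross : ∑ k ∈ range n, spinOff n k * (x k * x (k + 1)) = spinOff n p * (x p * x (p + 1)) :=
    sum_eq_single_of_mem p (mem_range.2 hp) fun k hk hkp => by rw [hx k hk hkp, mul_zero]
  have hblock : (spinDiag n p - B) * x p ^ 2 + (spinDiag n (p + 1) - B) * x (p + 1) ^ 2
      ≤ ∑ k ∈ range (n + 1), (spinDiag n k - B) * x k ^ 2 := by
    rw [← sum_pair (f := fun k => (spinDiag n k - B) * x k ^ 2) (Nat.ne_add_one p)]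
    refine sum_le_sum_of_subset_of_nonneg ?_ fun k hk _ => ?_
    · intro k hk
      simp only [mem_insert, mem_singleton] at hk
      rcases hk with rfl | rfl <;> simp only [mem_range] <;> omega
    · exact mul_nonneg (sub_nonneg.2 (hdiag k hk)) (sq_nonneg _)
  have hquad : 2 * spinOff n p * (x p * x (p + 1))
      ≤ (spinDiag n p - B) * x p ^ 2 + (spinDiag n (p + 1) - B) * x (p + 1) ^ 2 :=
    two_mul_mul_le_of_sq_le_mul (sub_nonneg.2 (hdiag p (mem_range.2 (by omega))))
      (sub_nonneg.2 (hdiag (p + 1) (mem_range.2 (by omega)))) (spinOff_sq_le hs0 hs hp)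
  simp only [sub_mul, sum_sub_distrib, ← mul_sum] at hblock
  rw [spinForm_eq, hcross]
  linarith

lemma spinForm_of_eq_zero (hn : 1 ≤ n) {x : ℕ → ℝ} (hx : ∀ k, 2 ≤ k → x k = 0) :
    spinForm n x = n * x 0 ^ 2 + (3 * n - 2) * x 1 ^ 2 - 2 * n * (x 0 * x 1) := by
  rw [spinForm_eq, sum_range_eq_add_of_two_le (by omega) fun k hk => by simp [hx k hk],
    sum_eq_single_of_mem 0 (mem_range.2 hn) fun k _ hk => by
      rw [hx (k + 1) (by omega), mul_zero, mul_zero]]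
  simp only [spinDiag, spinOff]
  push_cast
  ring

lemma exists_spinForm_eq (hn : 1 ≤ n) (hs0 : 0 ≤ s) (hs : s ^ 2 = n ^ 2 + (n - 1) ^ 2) :
    ∃ x : ℕ → ℝ, (∀ k, 0 ≤ x k) ∧ (∀ k, 2 ≤ k → x k = 0) ∧ x 0 ^ 2 + x 1 ^ 2 = 1 ∧
      spinForm n x = 2 * n - 1 - s := by
  have hn' : (1 : ℝ) ≤ n := by exact_mod_cast hn
  -- `(n, s - n + 1)` is an eigenvector of the block `[[n, -n], [-n, 3n - 2]]` for its least
  -- eigenvalue `2n - 1 - s`.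
  set b : ℝ := s - n + 1
  have hb : 0 ≤ b := by nlinarith
  set r := √(n ^ 2 + b ^ 2)
  have hr : 0 < r := Real.sqrt_pos.2 (by positivity)
  have hr2 : r ^ 2 = n ^ 2 + b ^ 2 := Real.sq_sqrt (by positivity)
  refine ⟨fun k => if k = 0 then n / r else if k = 1 then b / r else 0, fun k => ?_,
    fun k hk => by simp [show k ≠ 0 by omega, show k ≠ 1 by omega], ?_, ?_⟩
  · dsimp only
    split_ifs <;> positivity
  · simp only [if_pos, one_ne_zero, if_false, div_pow, ← add_div, hr2]
    field_simp
  · rw [spinForm_of_eq_zero hn fun k hk => by simp [show k ≠ 0 by omega, show k ≠ 1 by omega]]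
    simp only [if_pos, one_ne_zero, if_false]
    field_simp
    rw [hr2]
    linear_combination (s + 1 - n) * hs

end Bound

def zeroExtend {d : ℕ} (lam : Fin d → ℝ) (k : ℕ) : ℝ := if h : k < d then lam ⟨k, h⟩ else 0

lemma sum_range_zeroExtend {d : ℕ} (lam : Fin d → ℝ) :
    ∑ k ∈ range d, zeroExtend lam k = ∑ i, lam i := by
  simp [← Fin.sum_univ_eq_sum_range, zeroExtend]

lemma mem_map_support_of_zeroExtend_ne_zero {d : ℕ} {lam : Fin d → ℝ} {k : ℕ}
    (h : zeroExtend lam k ≠ 0) : k ∈ (univ.filter fun i => lam i ≠ 0).map Fin.valEmbedding := by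
  unfold zeroExtend at h
  split_ifs at h with hk
  · exact mem_map.2 ⟨⟨k, hk⟩, by simpa using h, rfl⟩
  · exact absurd rfl h

lemma spinVarSum_eq_spinForm (n : ℕ) (lam : Fin (n + 1) → ℝ) :
    spinVarSum (n + 1) lam = spinForm n fun k => √(zeroExtend lam k) := by
  unfold spinVarSum spinForm
  refine sum_congr (by rw [Nat.add_sub_cancel]) fun k _ => ?_
  simp only [spinOff, zeroExtend]
  push_cast
  ring

section Bspin

variable {n : ℕ} {s : ℝ}

lemma le_spinVarSum (hn : 1 ≤ n) (hs0 : 0 ≤ s) (hs : s ^ 2 = n ^ 2 + (n - 1) ^ 2)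
    {lam : Fin (n + 1) → ℝ} (h0 : ∀ k, 0 ≤ lam k) (h1 : ∑ k, lam k = 1)
    (h2 : (univ.filter fun k => lam k ≠ 0).card ≤ 2) :
    2 * n - 1 - s ≤ spinVarSum (n + 1) lam := by
  set x : ℕ → ℝ := fun k => √(zeroExtend lam k)
  have hsum : ∑ k ∈ range (n + 1), x k ^ 2 = 1 := by
    have hnonneg : ∀ k, 0 ≤ zeroExtend lam k := fun k => by
      unfold zeroExtend; split_ifs <;> simp [h0]
    simp only [x, Real.sq_sqrt (hnonneg _), sum_range_zeroExtend, h1]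
  have hsupp : ∀ k, x k ≠ 0 → k ∈ (univ.filter fun i => lam i ≠ 0).map Fin.valEmbedding :=
    fun k hk => mem_map_support_of_zeroExtend_ne_zero fun h => hk (by simp [x, h])
  obtain ⟨p, hp, hcross⟩ : ∃ p < n, ∀ k ∈ range n, k ≠ p → x k * x (k + 1) = 0 := by
    by_cases h : ∃ p < n, x p * x (p + 1) ≠ 0
    · obtain ⟨p, hp, hne⟩ := h
      exact ⟨p, hp, fun k _ hkp => by_contra fun hk =>
        hkp (eq_of_mul_succ_ne_zero hsupp (by rwa [card_map]) hk hne)⟩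
    · push Not at h
      exact ⟨0, hn, fun k hk _ => h k (mem_range.1 hk)⟩
  simpa [spinVarSum_eq_spinForm, hsum] using le_spinForm hs0 hs hp hcross

lemma exists_spinVarSum_eq (hn : 1 ≤ n) (hs0 : 0 ≤ s) (hs : s ^ 2 = n ^ 2 + (n - 1) ^ 2) :
    ∃ lam : Fin (n + 1) → ℝ, (∀ k, 0 ≤ lam k) ∧ ∑ k, lam k = 1 ∧
      (univ.filter fun k => lam k ≠ 0).card ≤ 2 ∧ spinVarSum (n + 1) lam = 2 * n - 1 - s := by
  obtain ⟨x, hx0, hx2, hx1, hval⟩ := exists_spinForm_eq hn hs0 hs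
  refine ⟨fun i => x i ^ 2, fun i => sq_nonneg _, ?_, ?_, ?_⟩
  · rw [Fin.sum_univ_eq_sum_range (fun k => x k ^ 2),
      sum_range_eq_add_of_two_le (by omega) fun k hk => by simp [hx2 k hk], hx1]
  · refine (card_le_card_of_injOn Fin.val (t := {0, 1}) (fun i hi => ?_)
      Fin.val_injective.injOn).trans card_le_two
    have hi : x i ≠ 0 := by simpa using hi
    have : (i : ℕ) < 2 := by by_contra h; exact hi (hx2 i (by omega))
    simp only [coe_insert, coe_singleton, Set.mem_insert_iff, Set.mem_singleton_iff]
    omega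
  · rw [spinVarSum_eq_spinForm, ← hval]
    congr 1
    funext k
    unfold zeroExtend
    split_ifs with hk
    · exact Real.sqrt_sq (hx0 k)
    · rw [Real.sqrt_zero, hx2 k (by omega)]

lemma isLeast_spinVarSum (hn : 1 ≤ n) (hs0 : 0 ≤ s) (hs : s ^ 2 = n ^ 2 + (n - 1) ^ 2) :
    IsLeast { v : ℝ | ∃ lam : Fin (n + 1) → ℝ, (∀ k, 0 ≤ lam k) ∧ (∑ k, lam k = 1) ∧
      (Finset.univ.filter fun k => lam k ≠ 0).card ≤ 2 ∧ v = spinVarSum (n + 1) lam }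
      (2 * n - 1 - s) := by
  refine ⟨?_, ?_⟩
  · obtain ⟨lam, h0, h1, h2, hval⟩ := exists_spinVarSum_eq hn hs0 hs
    exact ⟨lam, h0, h1, h2, hval.symm⟩
  · rintro v ⟨lam, h0, h1, h2, rfl⟩
    exact le_spinVarSum hn hs0 hs h0 h1 h2

end Bspin

/-- For j ≥ 1/2 and d = 2j+1, B_{j,2} = 4j - 1 - √(1 - 4j + 8j²),
where j = (d-1)/2. -/
theorem Bspin_two_closed_form
    (d : ℕ) (hd : 2 ≤ d) (j : ℝ) (hj : j = ((d : ℝ) - 1) / 2) :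
    Bspin d 2 = 4 * j - 1 - Real.sqrt (1 - 4 * j + 8 * j ^ 2) := by
  obtain ⟨n, rfl⟩ : ∃ n, d = n + 1 := ⟨d - 1, by omega⟩
  have hj' : j = n / 2 := by rw [hj]; push_cast; ring
  have hrad : 1 - 4 * j + 8 * j ^ 2 = n ^ 2 + (n - 1) ^ 2 := by rw [hj']; ring
  rw [hrad, show 4 * j - 1 = 2 * n - 1 by rw [hj']; ring]
  exact (isLeast_spinVarSum (by omega) (Real.sqrt_nonneg _)
    (Real.sq_sqrt (by positivity))).csInf_eq
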